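/- For every integer ℓ ≥ 1 and integer t ≥ 1: 2^{-t} ∑_{b odd, 1 ≤ b ≤ 2^t} (∑_{r=0}^{2^t−1} e(br²/2^t))^ℓ equals 0 if t = 1, or if t is odd and 4 ∤ ℓ; and equals 2^{(ℓ/2)t + ℓ/2 − 1} cos(πℓ/4) if t > 1 and either 4 ∣ ℓ or t is even. -/

import Mathlib

open Complex Finset

noncomputable def e (x : ℝ) : ℂ := Complex.exp (2 * Real.pi * Complex.I * x)

lemma e_add (x y : ℝ) : e (x + y) = e x * e y := by
  simp only [e]
  rw [← Complex.exp_add]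
  push_cast
  ring_nf

lemma e_int (n : ℤ) : e n = 1 := by
  simp only [e]
  rw [show (2 * Real.pi * Complex.I : ℂ) * (n : ℝ) = (n : ℤ) * (2 * Real.pi * Complex.I) by push_cast; ring]
  exact Complex.exp_int_mul_two_pi_mul_I n

lemma e_nat (n : ℕ) : e n = 1 := by
  simpa using e_int n

lemma e_nat_mul (n : ℕ) (x : ℝ) : e ((n : ℝ) * x) = e x ^ n := by
  induction n with
  | zero => simp [e]
  | succ k ih =>
    have : ((k : ℝ) + 1) * x = k * x + x := by ring
    rw [Nat.cast_succ, this, e_add, ih, pow_succ]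

lemma e_half : e (1/2) = -1 := by
  simp only [e]
  rw [show (2 * Real.pi * Complex.I : ℂ) * ((1:ℝ)/2 : ℝ) = Real.pi * Complex.I by push_cast; ring]
  exact Complex.exp_pi_mul_I

lemma e_quarter : e (1/4) = Complex.I := by
  simp only [e]
  rw [show (2 * Real.pi * Complex.I : ℂ) * ((1:ℝ)/4 : ℝ) = (Real.pi/2 : ℝ) * Complex.I by push_cast; ring]
  rw [Complex.exp_mul_I, ← Complex.ofReal_cos, ← Complex.ofReal_sin]
  simp [Real.cos_pi_div_two, Real.sin_pi_div_two]

lemma e_eighth_sq : e (1/8) ^ 2 = Complex.I := by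
  have := e_nat_mul 2 (1/8)
  norm_num at this
  rw [← this, ← e_quarter]

lemma e_eighth_pow_four : e (1/8) ^ 4 = -1 := by
  rw [show (4:ℕ) = 2*2 by norm_num, pow_mul, e_eighth_sq, Complex.I_sq]

/-- Periodicity mod 2^t. -/
lemma e_mod (t a b : ℕ) (h : a % 2^t = b % 2^t) :
    e (a / 2^t) = e (b / 2^t) := by
  have key : ∀ c : ℕ, e ((c : ℝ) / 2^t) = e (((c % 2^t : ℕ) : ℝ) / 2^t) := by
    intro c
    have hc : (c : ℝ) / 2^t = ((c / 2^t : ℕ) : ℝ) + ((c % 2^t : ℕ) : ℝ) / 2^t := by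
      have h2 : ((2:ℝ)^t) ≠ 0 := by positivity
      field_simp
      rw [show (2:ℝ)^t * ((c/2^t : ℕ) : ℝ) = ((2^t * (c/2^t) : ℕ) : ℝ) by push_cast; ring]
      rw [← Nat.cast_add, Nat.div_add_mod]
    rw [hc, e_add, e_nat, one_mul]
  rw [key a, key b, h]

noncomputable def G (t b : ℕ) : ℂ :=
  ∑ r ∈ Finset.range (2^t), e ((b * r ^ 2 : ℕ) / (2^t : ℝ))

lemma sum_range_two_mul {M : Type*} [AddCommMonoid M] (f : ℕ → M) (n : ℕ) :
    ∑ k ∈ Finset.range (2*n), f k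
      = ∑ s ∈ Finset.range n, f (2*s) + ∑ s ∈ Finset.range n, f (2*s+1) := by
  induction n with
  | zero => simp
  | succ m ih =>
    rw [show 2*(m+1) = 2*m+1+1 by ring, Finset.sum_range_succ, Finset.sum_range_succ, ih,
      Finset.sum_range_succ (fun s => f (2*s)), Finset.sum_range_succ (fun s => f (2*s+1))]
    abel

lemma e_odd_half (n : ℕ) (hn : Odd n) : e ((n : ℝ) / 2) = -1 := by
  obtain ⟨k, hk⟩ := hn
  subst hk
  rw [show ((2*k+1 : ℕ) : ℝ)/2 = (k : ℝ) + 1/2 by push_cast; ring, e_add, e_nat, e_half, one_mul]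

lemma e_zero : e 0 = 1 := by simpa using e_nat 0

lemma G1 (b : ℕ) (hb : Odd b) : G 1 b = 0 := by
  simp only [G]
  rw [show (2:ℕ)^1 = 2 from rfl, Finset.sum_range_succ, Finset.sum_range_succ,
    Finset.sum_range_zero]
  rw [show ((b * 0^2 : ℕ) : ℝ) / (2:ℝ)^1 = 0 by push_cast; ring]
  rw [show ((b * 1^2 : ℕ) : ℝ) / (2:ℝ)^1 = (b:ℝ)/2 by push_cast; ring]
  rw [e_zero, e_odd_half b hb]
  ring

lemma G2 (b : ℕ) : G 2 b = 2 * (1 + e ((b:ℝ)/4)) := by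
  simp only [G]
  rw [show (2:ℕ)^2 = 4 from rfl]
  rw [Finset.sum_range_succ, Finset.sum_range_succ, Finset.sum_range_succ,
    Finset.sum_range_succ, Finset.sum_range_zero]
  rw [show ((b * 0^2 : ℕ) : ℝ) / (2:ℝ)^2 = 0 by push_cast; ring]
  rw [show ((b * 1^2 : ℕ) : ℝ) / (2:ℝ)^2 = (b:ℝ)/4 by push_cast; ring]
  rw [show ((b * 2^2 : ℕ) : ℝ) / (2:ℝ)^2 = ((b:ℕ):ℝ) by push_cast; ring]
  rw [show ((b * 3^2 : ℕ) : ℝ) / (2:ℝ)^2 = ((2*b : ℕ):ℝ) + (b:ℝ)/4 by push_cast; ring]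
  rw [e_zero, e_add, e_nat, e_nat]
  ring

lemma G3 (b : ℕ) (hb : Odd b) : G 3 b = 4 * e ((b:ℝ)/8) := by
  have hbo : e ((b:ℝ)/2) = -1 := e_odd_half b hb
  simp only [G]
  rw [show (2:ℕ)^3 = 8 from rfl]
  rw [Finset.sum_range_succ, Finset.sum_range_succ, Finset.sum_range_succ,
    Finset.sum_range_succ, Finset.sum_range_succ, Finset.sum_range_succ,
    Finset.sum_range_succ, Finset.sum_range_succ, Finset.sum_range_zero]
  rw [show ((b * 0^2 : ℕ) : ℝ) / (2:ℝ)^3 = 0 by push_cast; ring]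
  rw [show ((b * 1^2 : ℕ) : ℝ) / (2:ℝ)^3 = (b:ℝ)/8 by push_cast; ring]
  rw [show ((b * 2^2 : ℕ) : ℝ) / (2:ℝ)^3 = (b:ℝ)/2 by push_cast; ring]
  rw [show ((b * 3^2 : ℕ) : ℝ) / (2:ℝ)^3 = ((b:ℕ):ℝ) + (b:ℝ)/8 by push_cast; ring]
  rw [show ((b * 4^2 : ℕ) : ℝ) / (2:ℝ)^3 = ((2*b:ℕ):ℝ) by push_cast; ring]
  rw [show ((b * 5^2 : ℕ) : ℝ) / (2:ℝ)^3 = ((3*b:ℕ):ℝ) + (b:ℝ)/8 by push_cast; ring]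
  rw [show ((b * 6^2 : ℕ) : ℝ) / (2:ℝ)^3 = ((4*b:ℕ):ℝ) + (b:ℝ)/2 by push_cast; ring]
  rw [show ((b * 7^2 : ℕ) : ℝ) / (2:ℝ)^3 = ((6*b:ℕ):ℝ) + (b:ℝ)/8 by push_cast; ring]
  rw [e_zero, e_add, e_add, e_add, e_add, e_nat, e_nat, e_nat, e_nat, e_nat, hbo]
  ring

lemma G_rec (m b : ℕ) (hb : Odd b) : G (m+4) b = 2 * G (m+2) b := by
  have fold : ∀ r : ℕ, e (((b * (2^(m+3) + r)^2 : ℕ) : ℝ) / (2:ℝ)^(m+4))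
      = e (((b * r^2 : ℕ) : ℝ) / (2:ℝ)^(m+4)) := by
    intro r
    apply e_mod
    rw [show b * (2^(m+3)+r)^2 = b*r^2 + 2^(m+4) * (b*r + b*2^(m+2)) by ring]
    exact Nat.add_mul_mod_self_left _ _ _
  have key : ∀ s : ℕ, ((b*(2*s)^2 : ℕ) : ℝ)/((2:ℝ)^(m+4)) = ((b*s^2 : ℕ):ℝ)/((2:ℝ)^(m+2)) := by
    intro s; push_cast
    rw [show (2:ℝ)^(m+4) = 2^(m+2)*4 by ring]
    rw [div_eq_div_iff (by positivity) (by positivity)]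
    ring
  have odd0 : ∑ s ∈ Finset.range (2^(m+2)),
      e (((b*(2*s+1)^2 : ℕ) : ℝ)/((2:ℝ)^(m+4))) = 0 := by
    rw [show (2:ℕ)^(m+2) = 2^(m+1) + 2^(m+1) by ring, Finset.sum_range_add]
    have neg : ∀ s : ℕ, e (((b*(2*(2^(m+1)+s)+1)^2 : ℕ):ℝ)/((2:ℝ)^(m+4)))
        = - e (((b*(2*s+1)^2 : ℕ):ℝ)/((2:ℝ)^(m+4))) := by
      intro s
      have harg : ((b*(2*(2^(m+1)+s)+1)^2 : ℕ) : ℝ)/((2:ℝ)^(m+4))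
          = (((b*2^m : ℕ):ℝ) + ((b*(2*s+1) : ℕ):ℝ)/2) + ((b*(2*s+1)^2 : ℕ):ℝ)/((2:ℝ)^(m+4)) := by
        push_cast
        rw [show (2:ℝ)^(m+4) = 2^m * 16 by ring]
        have h16 : ((2:ℝ)^m * 16) ≠ 0 := by positivity
        field_simp
        ring
      rw [harg, e_add, e_add, e_nat, e_odd_half _ (hb.mul (odd_two_mul_add_one s)), one_mul]
      ring
    rw [Finset.sum_congr rfl (fun s _ => neg s), Finset.sum_neg_distrib]
    exact add_neg_cancel _
  simp only [G]
  rw [show (2:ℕ)^(m+4) = 2^(m+3) + 2^(m+3) by ring, Finset.sum_range_add]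
  rw [Finset.sum_congr rfl (fun r _ => fold r), ← two_mul]
  rw [show (2:ℕ)^(m+3) = 2*2^(m+2) by ring, sum_range_two_mul]
  rw [Finset.sum_congr rfl (fun s _ => by rw [key s]), odd0, add_zero]

lemma G_even_t (n b : ℕ) (hb : Odd b) : G (2*n+2) b = 2^n * G 2 b := by
  induction n with
  | zero => simp
  | succ k ih =>
    rw [show 2*(k+1)+2 = (2*k)+4 by ring, G_rec _ _ hb, ih, pow_succ]
    ring

lemma G_odd_t (n b : ℕ) (hb : Odd b) : G (2*n+3) b = 2^n * G 3 b := by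
  induction n with
  | zero => simp
  | succ k ih =>
    rw [show 2*(k+1)+3 = (2*k+1)+4 by ring, G_rec _ _ hb, show 2*k+1+2 = 2*k+3 by ring, ih, pow_succ]
    ring

lemma sum_reindex (t : ℕ) (ht : 1 ≤ t) (F : ℕ → ℂ) :
    ∑ b ∈ (Finset.Icc 1 (2^t)).filter (fun b => Odd b), F b
      = ∑ k ∈ Finset.range (2^(t-1)), F (2*k+1) := by
  have h2 : 2^t = 2 * 2^(t-1) := by
    rw [← pow_succ']
    congr 1
    omega
  rw [show (Finset.Icc 1 (2^t)).filter (fun b => Odd b)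
      = (Finset.range (2^(t-1))).image (fun k => 2*k+1) by
    ext b
    simp only [Finset.mem_filter, Finset.mem_Icc, Finset.mem_image, Finset.mem_range,
      Nat.odd_iff]
    constructor
    · rintro ⟨⟨h1, hle⟩, hodd⟩
      exact ⟨b/2, by omega, by omega⟩
    · rintro ⟨k, hk, rfl⟩
      exact ⟨⟨by omega, by omega⟩, by omega⟩]
  rw [Finset.sum_image (by intro x _ y _ h; simp only at h; omega)]

lemma e_2k1_4 (k : ℕ) : e (((2*k+1 : ℕ):ℝ)/4) = (-1)^k * Complex.I := by
  rw [show ((2*k+1 : ℕ):ℝ)/4 = (k:ℝ)*(1/2) + 1/4 by push_cast; ring, e_add, e_nat_mul,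
    e_half, e_quarter]

lemma e_2k1_8 (k : ℕ) : e (((2*k+1 : ℕ):ℝ)/8) = Complex.I^k * e (1/8) := by
  rw [show ((2*k+1 : ℕ):ℝ)/8 = (k:ℝ)*(1/4) + 1/8 by push_cast; ring, e_add, e_nat_mul,
    e_quarter]

lemma one_add_I : (1 : ℂ) + Complex.I = (Real.sqrt 2 : ℝ) * Complex.exp ((Real.pi/4 : ℝ) * Complex.I) := by
  rw [Complex.exp_mul_I, ← Complex.ofReal_cos, ← Complex.ofReal_sin,
    Real.cos_pi_div_four, Real.sin_pi_div_four]
  have h2 : (Real.sqrt 2 : ℝ) * (Real.sqrt 2 : ℝ) = 2 := Real.mul_self_sqrt (by norm_num)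
  have h2' : ((Real.sqrt 2 : ℝ) : ℂ) * ((Real.sqrt 2 : ℝ) : ℂ) = 2 := by
    rw [← Complex.ofReal_mul, h2]; norm_num
  push_cast
  field_simp
  linear_combination (-(1:ℂ)-Complex.I) * h2'

lemma one_sub_I : (1 : ℂ) - Complex.I = (Real.sqrt 2 : ℝ) * Complex.exp ((-(Real.pi/4) : ℝ) * Complex.I) := by
  rw [Complex.exp_mul_I, ← Complex.ofReal_cos, ← Complex.ofReal_sin,
    Real.cos_neg, Real.sin_neg, Real.cos_pi_div_four, Real.sin_pi_div_four]
  have h2 : (Real.sqrt 2 : ℝ) * (Real.sqrt 2 : ℝ) = 2 := Real.mul_self_sqrt (by norm_num)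
  have h2' : ((Real.sqrt 2 : ℝ) : ℂ) * ((Real.sqrt 2 : ℝ) : ℂ) = 2 := by
    rw [← Complex.ofReal_mul, h2]; norm_num
  push_cast
  field_simp
  linear_combination (Complex.I - 1) * h2'

lemma onePlusI_pow (ℓ : ℕ) : (1 + Complex.I)^ℓ + (1 - Complex.I)^ℓ
    = (((Real.sqrt 2)^ℓ * (2 * Real.cos (Real.pi * ℓ / 4)) : ℝ) : ℂ) := by
  rw [one_add_I, one_sub_I, mul_pow, mul_pow, ← Complex.exp_nat_mul, ← Complex.exp_nat_mul,
    ← mul_add]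
  have h1 : (ℓ : ℂ) * ((Real.pi/4 : ℝ) * Complex.I) = ((Real.pi * ℓ / 4 : ℝ)) * Complex.I := by
    push_cast; ring
  have h2 : (ℓ : ℂ) * ((-(Real.pi/4) : ℝ) * Complex.I) = ((-(Real.pi * ℓ / 4) : ℝ)) * Complex.I := by
    push_cast; ring
  rw [h1, h2, Complex.exp_mul_I, Complex.exp_mul_I, ← Complex.ofReal_cos, ← Complex.ofReal_sin,
    ← Complex.ofReal_cos, ← Complex.ofReal_sin, Real.cos_neg, Real.sin_neg]
  push_cast
  ring

lemma I_pow_mod (ℓ : ℕ) : (Complex.I)^ℓ = Complex.I^(ℓ % 4) := by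
  conv_lhs => rw [← Nat.div_add_mod ℓ 4]
  rw [pow_add, pow_mul, Complex.I_pow_four, one_pow, one_mul]

lemma I_pow_ne_one (ℓ : ℕ) (h : ¬ (4 ∣ ℓ)) : (Complex.I)^ℓ ≠ 1 := by
  rw [I_pow_mod]
  have h4 : ℓ % 4 = 1 ∨ ℓ % 4 = 2 ∨ ℓ % 4 = 3 := by omega
  rcases h4 with h4 | h4 | h4 <;> rw [h4] <;> simp [Complex.ext_iff, pow_succ] <;> norm_num

lemma sqrt_two_pow (ℓ : ℕ) : (Real.sqrt 2)^ℓ = (2:ℝ) ^ ((ℓ:ℝ)/2) := by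
  rw [Real.sqrt_eq_rpow, ← Real.rpow_natCast ((2:ℝ) ^ ((1:ℝ)/(2:ℝ))) ℓ,
    ← Real.rpow_mul (by norm_num)]
  congr 1
  ring

lemma key_even (ℓ n : ℕ) (hℓ : 1 ≤ ℓ) :
    ((2:ℝ)^(2*n+2))⁻¹ * ((2:ℝ)^(2*n) * (((2:ℝ)^(n+1))^ℓ * ((Real.sqrt 2)^ℓ * 2)))
      = (2:ℝ) ^ ((ℓ:ℝ)/2 * ((2*n+2 : ℕ):ℝ) + (ℓ:ℝ)/2 - 1) := by
  have h1 : 1 ≤ (n+1)*ℓ := Nat.mul_pos (Nat.succ_pos n) hℓ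
  have step1 : ((2:ℝ)^(2*n+2))⁻¹ * ((2:ℝ)^(2*n) * (((2:ℝ)^(n+1))^ℓ * ((Real.sqrt 2)^ℓ * 2)))
      = (2:ℝ)^((n+1)*ℓ - 1) * (Real.sqrt 2)^ℓ := by
    rw [inv_mul_eq_div, div_eq_iff (by positivity), ← pow_mul]
    obtain ⟨k, hk⟩ : ∃ k, (n+1)*ℓ = k+1 := ⟨(n+1)*ℓ-1, by omega⟩
    rw [hk, Nat.add_sub_cancel, pow_succ, pow_add]
    ring
  rw [step1, sqrt_two_pow, ← Real.rpow_natCast 2 ((n+1)*ℓ - 1),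
    ← Real.rpow_add (by norm_num)]
  congr 1
  rw [Nat.cast_sub h1]
  push_cast
  ring

lemma main_even (ℓ n : ℕ) (hℓ : 1 ≤ ℓ) :
    ((2:ℂ)^(2*n+2))⁻¹ * ∑ k ∈ Finset.range (2^(2*n+1)), (G (2*n+2) (2*k+1))^ℓ
      = (((2:ℝ) ^ ((ℓ:ℝ)/2 * ((2*n+2 : ℕ):ℝ) + (ℓ:ℝ)/2 - 1) : ℝ) : ℂ)
        * ((Real.cos (Real.pi * ℓ / 4) : ℝ) : ℂ) := by
  have hG : ∀ k : ℕ, G (2*n+2) (2*k+1) = (2:ℂ)^(n+1) * (1 + (-1)^k * Complex.I) := by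
    intro k
    rw [G_even_t n _ (odd_two_mul_add_one k), G2, e_2k1_4, pow_succ]
    ring
  rw [Finset.sum_congr rfl (fun k _ => by rw [hG k])]
  rw [show (2:ℕ)^(2*n+1) = 2*2^(2*n) from pow_succ' 2 (2*n), sum_range_two_mul]
  have heven : ∀ s : ℕ, ((2:ℂ)^(n+1) * (1 + (-1)^(2*s) * Complex.I))^ℓ
      = ((2:ℂ)^(n+1))^ℓ * (1 + Complex.I)^ℓ := by
    intro s
    rw [pow_mul, neg_one_sq, one_pow, one_mul, mul_pow]
  have hodd : ∀ s : ℕ, ((2:ℂ)^(n+1) * (1 + (-1)^(2*s+1) * Complex.I))^ℓ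
      = ((2:ℂ)^(n+1))^ℓ * (1 - Complex.I)^ℓ := by
    intro s
    rw [show ((-1:ℂ))^(2*s+1) = -1 by rw [pow_succ, pow_mul, neg_one_sq, one_pow, one_mul],
      show (1 + (-1) * Complex.I) = 1 - Complex.I by ring, mul_pow]
  rw [Finset.sum_congr rfl (fun s _ => heven s), Finset.sum_congr rfl (fun s _ => hodd s),
    Finset.sum_const, Finset.sum_const, Finset.card_range, nsmul_eq_mul, nsmul_eq_mul,
    ← mul_add, ← mul_add, onePlusI_pow]
  rw [← key_even ℓ n hℓ]
  push_cast
  ring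

lemma hG_odd (n k : ℕ) : G (2*n+3) (2*k+1) = (2:ℂ)^(n+2) * (Complex.I^k * e (1/8)) := by
  rw [G_odd_t n _ (odd_two_mul_add_one k), G3 _ (odd_two_mul_add_one k), e_2k1_8,
    show (2:ℂ)^(n+2) = 2^n * 4 by rw [pow_add]; norm_num]
  ring

lemma sum_I_pow (ℓ n : ℕ) :
    ∑ k ∈ Finset.range (2^(2*n+2)), (G (2*n+3) (2*k+1))^ℓ
      = (∑ k ∈ Finset.range (2^(2*n+2)), (Complex.I^ℓ)^k) * (((2:ℂ)^(n+2))^ℓ * e (1/8)^ℓ) := by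
  rw [Finset.sum_mul]
  refine Finset.sum_congr rfl (fun k _ => ?_)
  rw [hG_odd n k, mul_pow, mul_pow, ← pow_right_comm]
  ring

lemma I_pow_pow (ℓ n : ℕ) : ((Complex.I^ℓ)^(2^(2*n+2)) : ℂ) = 1 := by
  rw [show (2:ℕ)^(2*n+2) = 4*2^(2*n) by rw [pow_add]; ring, ← pow_mul,
    show ℓ*(4*2^(2*n)) = 4*(ℓ*2^(2*n)) by ring, pow_mul, Complex.I_pow_four, one_pow]

lemma main_odd_zero (ℓ n : ℕ) (h : ¬ (4 ∣ ℓ)) :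
    ∑ k ∈ Finset.range (2^(2*n+2)), (G (2*n+3) (2*k+1))^ℓ = 0 := by
  rw [sum_I_pow, geom_sum_eq (I_pow_ne_one ℓ h), I_pow_pow, sub_self, zero_div, zero_mul]

lemma key_odd (ℓ n : ℕ) (hℓ : 1 ≤ ℓ) :
    ((2:ℝ)^(2*n+3))⁻¹ * ((2:ℝ)^(2*n+2) * ((2:ℝ)^(n+2))^ℓ)
      = (2:ℝ) ^ ((ℓ:ℝ)/2 * ((2*n+3 : ℕ):ℝ) + (ℓ:ℝ)/2 - 1) := by
  have h1 : 1 ≤ (n+2)*ℓ := Nat.mul_pos (Nat.succ_pos _) hℓ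
  have step1 : ((2:ℝ)^(2*n+3))⁻¹ * ((2:ℝ)^(2*n+2) * ((2:ℝ)^(n+2))^ℓ)
      = (2:ℝ)^((n+2)*ℓ - 1) := by
    rw [inv_mul_eq_div, div_eq_iff (by positivity), ← pow_mul]
    obtain ⟨k, hk⟩ : ∃ k, (n+2)*ℓ = k+1 := ⟨(n+2)*ℓ-1, by omega⟩
    rw [hk, Nat.add_sub_cancel, pow_succ, pow_add]
    ring
  rw [step1, ← Real.rpow_natCast 2 ((n+2)*ℓ - 1)]
  congr 1
  rw [Nat.cast_sub h1]
  push_cast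
  ring

lemma main_odd_four (ℓ n m : ℕ) (hm : ℓ = 4*m) (hℓ : 1 ≤ ℓ) :
    ((2:ℂ)^(2*n+3))⁻¹ * ∑ k ∈ Finset.range (2^(2*n+2)), (G (2*n+3) (2*k+1))^ℓ
      = (((2:ℝ) ^ ((ℓ:ℝ)/2 * ((2*n+3 : ℕ):ℝ) + (ℓ:ℝ)/2 - 1) : ℝ) : ℂ)
        * ((Real.cos (Real.pi * ℓ / 4) : ℝ) : ℂ) := by
  have hIl : (Complex.I : ℂ)^ℓ = 1 := by
    rw [hm, pow_mul, Complex.I_pow_four, one_pow]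
  have hzl : e (1/8)^ℓ = (-1)^m := by
    rw [hm, pow_mul, e_eighth_pow_four]
  have hcos : Real.cos (Real.pi * ℓ / 4) = (-1)^m := by
    rw [hm, show Real.pi * (4*m : ℕ) / 4 = (m : ℕ) * Real.pi - 0 by push_cast; ring,
      Real.cos_nat_mul_pi_sub, Real.cos_zero, mul_one]
  rw [sum_I_pow, hIl, hzl, hcos]
  simp only [one_pow, Finset.sum_const, Finset.card_range, nsmul_eq_mul, mul_one]
  rw [← key_odd ℓ n hℓ]
  push_cast
  ring

theorem stmt9 (ℓ : ℕ) (hℓ : 1 ≤ ℓ) (t : ℕ) (ht : 1 ≤ t) :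
    ((t = 1 ∨ (Odd t ∧ ¬ (4 ∣ ℓ))) →
      ((2 : ℂ) ^ t)⁻¹ * ∑ b ∈ (Finset.Icc 1 (2 ^ t)).filter (fun b => Odd b),
          (∑ r ∈ Finset.range (2 ^ t), e ((b * r ^ 2 : ℕ) / (2 ^ t : ℝ))) ^ ℓ = 0) ∧
    (1 < t → (4 ∣ ℓ ∨ Even t) →
      ((2 : ℂ) ^ t)⁻¹ * ∑ b ∈ (Finset.Icc 1 (2 ^ t)).filter (fun b => Odd b),
          (∑ r ∈ Finset.range (2 ^ t), e ((b * r ^ 2 : ℕ) / (2 ^ t : ℝ))) ^ ℓ =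
        (((2 : ℝ) ^ ((ℓ : ℝ) / 2 * t + (ℓ : ℝ) / 2 - 1) : ℝ) : ℂ) *
          ((Real.cos (Real.pi * ℓ / 4) : ℝ) : ℂ)) := by
  have hℓ0 : ℓ ≠ 0 := by omega
  constructor
  · intro hcase
    have h1 : t = 1 ∨ ∃ n, t = 2*n+3 := by
      rcases hcase with rfl | ⟨ho, _⟩
      · exact Or.inl rfl
      · rw [Nat.odd_iff] at ho
        rcases eq_or_ne t 1 with rfl | hne
        · exact Or.inl rfl
        · exact Or.inr ⟨(t-3)/2, by omega⟩
    rcases h1 with rfl | ⟨n, rfl⟩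
    · simp only [show ∀ b : ℕ, (∑ r ∈ Finset.range (2^1), e ((b * r ^ 2 : ℕ) / (2^1 : ℝ)))
          = G 1 b from fun b => rfl]
      rw [sum_reindex 1 le_rfl]
      simp only [show (1:ℕ)-1 = 0 from rfl, pow_zero, Finset.sum_range_one]
      rw [G1 1 odd_one, zero_pow hℓ0, mul_zero]
    · have hl4 : ¬ (4 ∣ ℓ) := by
        rcases hcase with h | ⟨_, h⟩
        · omega
        · exact h
      simp only [show ∀ b : ℕ, (∑ r ∈ Finset.range (2^(2*n+3)),
          e ((b * r ^ 2 : ℕ) / (2^(2*n+3) : ℝ))) = G (2*n+3) b from fun b => rfl]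
      rw [sum_reindex _ (by omega), show 2*n+3-1 = 2*n+2 by omega,
        main_odd_zero ℓ n hl4, mul_zero]
  · intro ht1 hcase
    rcases Nat.even_or_odd t with he | ho
    · obtain ⟨j, hj⟩ := he
      obtain ⟨n, rfl⟩ : ∃ n, t = 2*n+2 := ⟨j-1, by omega⟩
      simp only [show ∀ b : ℕ, (∑ r ∈ Finset.range (2^(2*n+2)),
          e ((b * r ^ 2 : ℕ) / (2^(2*n+2) : ℝ))) = G (2*n+2) b from fun b => rfl]
      rw [sum_reindex _ (by omega), show 2*n+2-1 = 2*n+1 by omega, main_even ℓ n hℓ]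
    · have hl4 : 4 ∣ ℓ := by
        rcases hcase with h | h
        · exact h
        · rw [Nat.even_iff] at h
          rw [Nat.odd_iff] at ho
          omega
      obtain ⟨m, hm⟩ := hl4
      rw [Nat.odd_iff] at ho
      obtain ⟨n, rfl⟩ : ∃ n, t = 2*n+3 := ⟨(t-3)/2, by omega⟩
      simp only [show ∀ b : ℕ, (∑ r ∈ Finset.range (2^(2*n+3)),
          e ((b * r ^ 2 : ℕ) / (2^(2*n+3) : ℝ))) = G (2*n+3) b from fun b => rfl]
      rw [sum_reindex _ (by omega), show 2*n+3-1 = 2*n+2 by omega,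
        main_odd_four ℓ n m hm hℓ]
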